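/- arXiv:1507.00385 — 2 statements merged into one kernel-verified Lean document; each statement's English description precedes it below -/
import Mathlib

section
/- Floyd-Hoare rule for whileM: let cond : World → Bool × World satisfy precondition p and postcondition g, and body : World → Unit × World satisfy postcondition b (with trivial precondition). Assume the bounds Inv (∀ w w' w'', p w → g w true w' → b w' () w'' → p w''), Exit (∀ w w', p w → g w false w' → q w () w'), and OneState (∀ w w' w'', q w () w'' → q w' () w''). Then, assuming the loop whileM cond body terminates, it satisfies precondition p and postcondition q. -/
/-- Big-step evaluation of `whileM cond body`: `WhileEval cond body w wf` means
the loop, started in world `w`, terminates in world `wf`. -/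
inductive WhileEval {World : Type*} (cond : World → Bool × World)
    (body : World → Unit × World) : World → World → Prop
  | done : ∀ w w', cond w = (false, w') → WhileEval cond body w w'
  | step : ∀ w w' w'' wf, cond w = (true, w') → body w' = ((), w'') →
      WhileEval cond body w'' wf → WhileEval cond body w wf

theorem stmt_17 {World : Type*}
    (cond : World → Bool × World) (body : World → Unit × World)
    (p : World → Prop) (g : World → Bool → World → Prop)
    (b : World → Unit → World → Prop) (q : World → Unit → World → Prop)
    (hcond : ∀ w, p w → g w (cond w).1 (cond w).2)
    (hbody : ∀ w, b w () (body w).2)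
    (hInv : ∀ w w' w'', p w → g w true w' → b w' () w'' → p w'')
    (hExit : ∀ w w', p w → g w false w' → q w () w')
    (hOneState : ∀ w w' w'', q w () w'' → q w' () w'') :
    ∀ w wf, p w → WhileEval cond body w wf → q w () wf := by
  intro w wf hp hev
  induction hev with
  | done w w' hc =>
    have := hcond w hp
    rw [hc] at this
    exact hExit w w' hp this
  | step w w' w'' wf hc hb _ ih =>
    have hg := hcond w hp
    rw [hc] at hg
    have hb' := hbody w'
    rw [hb] at hb'
    exact hOneState w'' w wf (ih (hInv w w' w'' hp hg hb'))
end

section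
/- Semantics preservation of the bound-erasure translation: in a lambda calculus extended with bound abstraction {φ} ⇒ e and bound application e [φ], where reduction includes the rule ({φ} ⇒ e)[φ'] ↦ e and the translation replaces bound abstraction by ordinary lambda abstraction over a fresh ghost variable and bound application by application to a constant-true function, if a closed term e reduces (in the extended calculus) to a constant c, then its translation e' reduces to c in the base calculus. -/
/-- Terms of a lambda calculus with constants, extended with
bound abstraction `cabs e` (i.e. `{φ} ⇒ e`) and bound application
`capp e` (i.e. `e [φ]`).  Since the reduction rule for bounds ignores
the bound `φ` itself, bounds are not recorded in the syntax. -/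
inductive Tm : Type
  | var  : ℕ → Tm
  | cst  : ℕ → Tm
  | tt   : Tm
  | lam  : Tm → Tm
  | app  : Tm → Tm → Tm
  | cabs : Tm → Tm
  | capp : Tm → Tm
  deriving DecidableEq

namespace Tm

/-- Shift (by one) the de Bruijn indices of free variables `≥ d`. -/
def shift (d : ℕ) : Tm → Tm
  | var n    => if n < d then var n else var (n + 1)
  | cst c    => cst c
  | tt       => tt
  | lam t    => lam (shift (d + 1) t)
  | app a b  => app (shift d a) (shift d b)
  | cabs e   => cabs (shift d e)
  | capp e   => capp (shift d e)

/-- Substitute `s` for variable `n` (decrementing the variables above `n`). -/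
def subst : Tm → ℕ → Tm → Tm
  | var m, n, s   => if m = n then s else if n < m then var (m - 1) else var m
  | cst c, _, _   => cst c
  | tt, _, _      => tt
  | lam t, n, s   => lam (subst t (n + 1) (shift 0 s))
  | app a b, n, s => app (subst a n s) (subst b n s)
  | cabs e, n, s  => cabs (subst e n s)
  | capp e, n, s  => capp (subst e n s)

/-- Values of the calculus. -/
inductive IsVal : Tm → Prop
  | cst : ∀ c, IsVal (cst c)
  | tt  : IsVal tt
  | lam : ∀ t, IsVal (lam t)

/-- Call-by-value small-step reduction of the base calculus. -/
inductive StepB : Tm → Tm → Prop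
  | beta : ∀ t v, IsVal v → StepB (app (lam t) v) (subst t 0 v)
  | app1 : ∀ t t' u, StepB t t' → StepB (app t u) (app t' u)
  | app2 : ∀ v u u', IsVal v → StepB u u' → StepB (app v u) (app v u')

/-- Small-step reduction of the extended calculus: the base rules plus the
rule `({φ} ⇒ e)[φ'] ↦ e` and a congruence rule for bound application. -/
inductive StepE : Tm → Tm → Prop
  | beta  : ∀ t v, IsVal v → StepE (app (lam t) v) (subst t 0 v)
  | app1  : ∀ t t' u, StepE t t' → StepE (app t u) (app t' u)
  | app2  : ∀ v u u', IsVal v → StepE u u' → StepE (app v u) (app v u')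
  | cbeta : ∀ e, StepE (capp (cabs e)) e
  | capp1 : ∀ t t', StepE t t' → StepE (capp t) (capp t')

/-- The translation: bound abstraction becomes an ordinary lambda abstraction
over a fresh ghost variable (hence the shift), and bound application becomes
application to a constant-true (ghost) function. -/
def tr : Tm → Tm
  | var n   => var n
  | cst c   => cst c
  | tt      => tt
  | lam t   => lam (tr t)
  | app a b => app (tr a) (tr b)
  | cabs e  => lam (shift 0 (tr e))
  | capp e  => app (tr e) (lam tt)

/-- `ClosedUnder k e` : all free variables of `e` are `< k`. -/
def ClosedUnder : ℕ → Tm → Prop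
  | k, var n   => n < k
  | _, cst _   => True
  | _, tt      => True
  | k, lam t   => ClosedUnder (k + 1) t
  | k, app a b => ClosedUnder k a ∧ ClosedUnder k b
  | k, cabs e  => ClosedUnder k e
  | k, capp e  => ClosedUnder k e

def Closed (e : Tm) : Prop := ClosedUnder 0 e

end Tm

namespace Tm

theorem shift_shift (t : Tm) : ∀ d d', d' ≤ d →
    shift d' (shift d t) = shift (d + 1) (shift d' t) := by
  induction t with
  | var n =>
    intro d d' h
    simp only [shift]
    rcases lt_or_ge n d' with h1 | h1
    · simp [shift, h1, lt_of_lt_of_le h1 h, Nat.lt_succ_of_lt (lt_of_lt_of_le h1 h)]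
    · rcases lt_or_ge n d with h2 | h2
      · simp [shift, h2, Nat.not_lt.mpr h1, Nat.succ_lt_succ h2]
      · have : ¬ n + 1 < d' := by omega
        have : ¬ n + 1 < d + 1 := by omega
        simp [shift, Nat.not_lt.mpr h2, Nat.not_lt.mpr h1] <;> omega
  | cst c => intro d d' h; rfl
  | tt => intro d d' h; rfl
  | lam t ih => intro d d' h; simp only [shift]; rw [ih (d+1) (d'+1) (by omega)]
  | app a b iha ihb => intro d d' h; simp only [shift]; rw [iha d d' h, ihb d d' h]
  | cabs e ih => intro d d' h; simp only [shift]; rw [ih d d' h]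
  | capp e ih => intro d d' h; simp only [shift]; rw [ih d d' h]

theorem shift_subst (t : Tm) : ∀ n s d, d ≤ n →
    shift d (subst t n s) = subst (shift d t) (n + 1) (shift d s) := by
  induction t with
  | var m =>
    intro n s d h
    rcases eq_or_ne m n with rfl | hne
    · have : ¬ m < d := by omega
      simp [subst, shift, this]
    · rcases lt_or_gt_of_ne hne with h1 | h1
      · rcases lt_or_ge m d with h2 | h2
        · have h3 : m ≠ n + 1 := by omega
          have h4 : ¬ n + 1 < m := by omega
          have h5 : ¬ n < m := by omega
          simp [subst, shift, h1, h2, hne, h3, h4, h5]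
        · have h3 : ¬ m + 1 = n + 1 := by omega
          have h4 : ¬ n + 1 < m + 1 := by omega
          simp [subst, shift, hne, Nat.not_lt.mpr h1.le, Nat.not_lt.mpr h2, h3, h4]
      · have h2 : ¬ m - 1 < d := by omega
        have h3 : ¬ m < d := by omega
        have h4 : m + 1 ≠ n + 1 := by omega
        simp [subst, shift, hne, h1, h2, h3, h4]
        omega
  | cst c => intro n s d h; rfl
  | tt => intro n s d h; rfl
  | lam t ih =>
    intro n s d h
    simp only [subst, shift]
    rw [ih (n+1) (shift 0 s) (d+1) (by omega), shift_shift s d 0 (by omega)]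
  | app a b iha ihb => intro n s d h; simp only [subst, shift]; rw [iha n s d h, ihb n s d h]
  | cabs e ih => intro n s d h; simp only [subst, shift]; rw [ih n s d h]
  | capp e ih => intro n s d h; simp only [subst, shift]; rw [ih n s d h]

theorem subst_shift_cancel (t : Tm) : ∀ d s, subst (shift d t) d s = t := by
  induction t with
  | var n =>
    intro d s
    rcases lt_or_ge n d with h | h
    · simp [shift, subst, h, Nat.ne_of_lt h, Nat.not_lt.mpr h.le]
    · have h1 : n + 1 ≠ d := by omega
      have h2 : d < n + 1 := by omega
      simp [shift, subst, Nat.not_lt.mpr h, h1, h2]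
  | cst c => intro d s; rfl
  | tt => intro d s; rfl
  | lam t ih => intro d s; simp only [shift, subst]; rw [ih (d+1)]
  | app a b iha ihb => intro d s; simp only [shift, subst]; rw [iha, ihb]
  | cabs e ih => intro d s; simp only [shift, subst]; rw [ih]
  | capp e ih => intro d s; simp only [shift, subst]; rw [ih]

theorem tr_shift (t : Tm) : ∀ d, tr (shift d t) = shift d (tr t) := by
  induction t with
  | var n => intro d; simp only [shift, tr]; split <;> rfl
  | cst c => intro d; rfl
  | tt => intro d; rfl
  | lam t ih => intro d; simp only [shift, tr]; rw [ih]
  | app a b iha ihb => intro d; simp only [shift, tr]; rw [iha, ihb]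
  | cabs e ih =>
    intro d
    simp only [shift, tr]
    rw [ih, shift_shift (tr e) d 0 (by omega)]
  | capp e ih => intro d; simp only [shift, tr]; rw [ih]

theorem tr_subst (t : Tm) : ∀ n s, tr (subst t n s) = subst (tr t) n (tr s) := by
  induction t with
  | var m =>
    intro n s
    simp only [subst, tr]
    split
    · rfl
    · split <;> rfl
  | cst c => intro n s; rfl
  | tt => intro n s; rfl
  | lam t ih =>
    intro n s
    simp only [subst, tr]
    rw [ih (n+1) (shift 0 s), tr_shift]
  | app a b iha ihb => intro n s; simp only [subst, tr]; rw [iha, ihb]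
  | cabs e ih =>
    intro n s
    simp only [subst, tr]
    rw [ih n s, shift_subst (tr e) n (tr s) 0 (by omega)]
  | capp e ih => intro n s; simp only [subst, tr]; rw [ih]

theorem tr_isVal {v : Tm} (h : IsVal v) : IsVal (tr v) := by
  cases h with
  | cst c => exact IsVal.cst c
  | tt => exact IsVal.tt
  | lam t => exact IsVal.lam (tr t)

theorem step_sim {a b : Tm} (h : StepE a b) : StepB (tr a) (tr b) := by
  induction h with
  | beta t v hv =>
    rw [tr_subst]
    exact StepB.beta (tr t) (tr v) (tr_isVal hv)
  | app1 t t' u _ ih => exact StepB.app1 _ _ _ ih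
  | app2 v u u' hv _ ih => exact StepB.app2 _ _ _ (tr_isVal hv) ih
  | cbeta e =>
    have := StepB.beta (shift 0 (tr e)) (lam tt) (IsVal.lam tt)
    rwa [subst_shift_cancel] at this
  | capp1 t t' _ ih => exact StepB.app1 _ _ _ ih

theorem rtg_sim {a b : Tm} (h : Relation.ReflTransGen StepE a b) :
    Relation.ReflTransGen StepB (tr a) (tr b) := by
  induction h with
  | refl => exact Relation.ReflTransGen.refl
  | tail _ hstep ih => exact ih.tail (step_sim hstep)

end Tm

open Tm in
/-- Semantics preservation of the bound-erasure translation: if a closed term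
of the extended calculus reduces to a constant `c`, then its translation
reduces to `c` in the base calculus. -/
theorem stmt_19 (e : Tm) (c : ℕ) (hc : Closed e)
    (h : Relation.ReflTransGen StepE e (cst c)) :
    Relation.ReflTransGen StepB (tr e) (cst c) := rtg_sim h
end
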